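/- arXiv:2306.07793 — 8 statements merged into one kernel-verified Lean document; each statement's English description precedes it below -/
import Mathlib

section
/- For integers a ≥ b ≥ 1 and α ∈ [0,1], the largest eigenvalue of the A_α-matrix of the complete bipartite graph K_{a,b} is (α(a+b) + √(α²(a+b)² + 4ab(1−2α)))/2. -/
open scoped Classical

/-- The `A_α`-matrix of a graph: `α D(G) + (1-α) A(G)`. -/
noncomputable def Aalpha {V : Type*} [Fintype V] (G : SimpleGraph V) (α : ℝ) :
    Matrix V V ℝ :=
  α • Matrix.diagonal (fun v => ((G.neighborSet v).ncard : ℝ)) +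
    (1 - α) • (Matrix.of fun u v => if G.Adj u v then (1 : ℝ) else 0)

/-- `r` is the largest (real) eigenvalue of the matrix `M`. -/
def IsLargestEigenvalue {n : Type*} [Fintype n] (M : Matrix n n ℝ) (r : ℝ) : Prop :=
  (∃ x : n → ℝ, x ≠ 0 ∧ M.mulVec x = r • x) ∧
    ∀ s : ℝ, (∃ x : n → ℝ, x ≠ 0 ∧ M.mulVec x = s • x) → s ≤ r

/-- The friendship graph `F_k = K₁ ∨ k K₂` on `2k+1` vertices: vertex `0` is joined to
all others, and the remaining vertices are matched in pairs `(1,2), (3,4), …`. -/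
def friendshipGraph (k : ℕ) : SimpleGraph (Fin (2 * k + 1)) where
  Adj u v := u ≠ v ∧ (u.val = 0 ∨ v.val = 0 ∨ (u.val + 1) / 2 = (v.val + 1) / 2)
  symm := ⟨by
    rintro u v ⟨h1, h2⟩
    refine ⟨h1.symm, ?_⟩
    rcases h2 with h | h | h
    · exact Or.inr (Or.inl h)
    · exact Or.inl h
    · exact Or.inr (Or.inr h.symm)⟩
  loopless := ⟨fun u h => h.1 rfl⟩

/-- The join `G₁ ∨ G₂` of two graphs. -/
def graphJoin {V₁ V₂ : Type*} (G₁ : SimpleGraph V₁) (G₂ : SimpleGraph V₂) :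
    SimpleGraph (V₁ ⊕ V₂) where
  Adj x y :=
    match x, y with
    | Sum.inl a, Sum.inl b => G₁.Adj a b
    | Sum.inr a, Sum.inr b => G₂.Adj a b
    | _, _ => True
  symm := ⟨by
    rintro (a | a) (b | b) h
    · exact G₁.adj_symm h
    · trivial
    · trivial
    · exact G₂.adj_symm h⟩
  loopless := ⟨by
    rintro (a | a) h
    · exact G₁.irrefl h
    · exact G₂.irrefl h⟩

/-- A graph is 2-edge-connected if it has at least 3 vertices, is connected, and
remains connected after deleting any single edge. -/
def TwoEdgeConnected {V : Type*} [Fintype V] (G : SimpleGraph V) : Prop :=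
  3 ≤ Fintype.card V ∧ G.Connected ∧ ∀ e ∈ G.edgeSet, (G.deleteEdges {e}).Connected

/-- A graph is minimally 2-edge-connected if it is 2-edge-connected and deleting any
edge destroys 2-edge-connectedness. -/
def MinimallyTwoEdgeConnected {V : Type*} [Fintype V] (G : SimpleGraph V) : Prop :=
  TwoEdgeConnected G ∧ ∀ e ∈ G.edgeSet, ¬ TwoEdgeConnected (G.deleteEdges {e})

/-- A graph is 3-connected if it has more than 3 vertices and deleting any at most 2
vertices leaves a connected graph. -/
def ThreeConnected {V : Type*} [Fintype V] (G : SimpleGraph V) : Prop :=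
  3 < Fintype.card V ∧ ∀ s : Set V, s.ncard ≤ 2 → (G.induce sᶜ).Connected

/-- A graph is minimally 3-connected if it is 3-connected and deleting any edge
destroys 3-connectedness. -/
def MinimallyThreeConnected {V : Type*} [Fintype V] (G : SimpleGraph V) : Prop :=
  ThreeConnected G ∧ ∀ e ∈ G.edgeSet, ¬ ThreeConnected (G.deleteEdges {e})

lemma nsL (a b : ℕ) (i : Fin a) :
    ((completeBipartiteGraph (Fin a) (Fin b)).neighborSet (Sum.inl i)).ncard = b := by
  have : (completeBipartiteGraph (Fin a) (Fin b)).neighborSet (Sum.inl i)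
      = Set.range Sum.inr := by
    ext v; cases v <;> simp [SimpleGraph.neighborSet]
  rw [this, Set.ncard_eq_toFinset_card']
  simp [Finset.card_image_of_injective _ Sum.inr_injective]

lemma nsR (a b : ℕ) (j : Fin b) :
    ((completeBipartiteGraph (Fin a) (Fin b)).neighborSet (Sum.inr j)).ncard = a := by
  have : (completeBipartiteGraph (Fin a) (Fin b)).neighborSet (Sum.inr j)
      = Set.range Sum.inl := by
    ext v; cases v <;> simp [SimpleGraph.neighborSet]
  rw [this, Set.ncard_eq_toFinset_card']
  simp [Finset.card_image_of_injective _ Sum.inl_injective]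

lemma mulVec_inl (a b : ℕ) (α : ℝ) (x : Fin a ⊕ Fin b → ℝ) (i : Fin a) :
    (Aalpha (completeBipartiteGraph (Fin a) (Fin b)) α).mulVec x (Sum.inl i)
      = α * b * x (Sum.inl i) + (1 - α) * ∑ j, x (Sum.inr j) := by
  simp only [Aalpha, Matrix.mulVec, dotProduct, Fintype.sum_sum_type,
    Matrix.add_apply, Matrix.smul_apply, Matrix.diagonal_apply, Matrix.of_apply,
    completeBipartiteGraph_adj, smul_eq_mul]
  simp [Finset.sum_add_distrib, Finset.mul_sum, nsL, apply_ite, Finset.sum_ite_eq',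
    mul_comm, mul_assoc, mul_left_comm]

lemma mulVec_inr (a b : ℕ) (α : ℝ) (x : Fin a ⊕ Fin b → ℝ) (j : Fin b) :
    (Aalpha (completeBipartiteGraph (Fin a) (Fin b)) α).mulVec x (Sum.inr j)
      = α * a * x (Sum.inr j) + (1 - α) * ∑ i, x (Sum.inl i) := by
  simp only [Aalpha, Matrix.mulVec, dotProduct, Fintype.sum_sum_type,
    Matrix.add_apply, Matrix.smul_apply, Matrix.diagonal_apply, Matrix.of_apply,
    completeBipartiteGraph_adj, smul_eq_mul]
  simp [Finset.sum_add_distrib, Finset.mul_sum, nsR, apply_ite, Finset.sum_ite_eq',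
    mul_comm, mul_assoc, mul_left_comm]
  ring

lemma eig_le {n : Type*} [Fintype n] [Nonempty n] (M : Matrix n n ℝ)
    (hM : ∀ i j, 0 ≤ M i j) (y : n → ℝ) (hy : ∀ i, 0 < y i) (ρ : ℝ)
    (hMy : ∀ i, M.mulVec y i ≤ ρ * y i) (s : ℝ) (x : n → ℝ) (hx : x ≠ 0)
    (hMx : M.mulVec x = s • x) : s ≤ ρ := by
  obtain ⟨i, hi⟩ := Finset.exists_max_image Finset.univ (fun v => |x v| / y v)
    ⟨Classical.arbitrary n, Finset.mem_univ _⟩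
  set c := |x i| / y i with hc
  have hxle : ∀ j, |x j| ≤ c * y j := by
    intro j
    have := hi.2 j (Finset.mem_univ j)
    calc |x j| = |x j| / y j * y j := (div_mul_cancel₀ _ (hy j).ne').symm
    _ ≤ c * y j := by
        apply mul_le_mul_of_nonneg_right this (hy j).le
  have hcpos : 0 < c := by
    obtain ⟨v, hv⟩ : ∃ v, x v ≠ 0 := by
      by_contra h; push_neg at h; exact hx (funext h)
    have h1 : 0 < |x v| / y v := div_pos (abs_pos.mpr hv) (hy v)
    exact lt_of_lt_of_le h1 (hi.2 v (Finset.mem_univ v))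
  have hxi : |x i| = c * y i := (div_mul_cancel₀ _ (hy i).ne').symm
  have key : |s| * (c * y i) ≤ ρ * (c * y i) := by
    calc |s| * (c * y i) = |s * x i| := by rw [abs_mul, hxi]
    _ = |M.mulVec x i| := by rw [hMx]; simp [mul_comm]
    _ ≤ ∑ j, |M i j * x j| := by
        simpa [Matrix.mulVec, dotProduct] using
          Finset.abs_sum_le_sum_abs (fun j => M i j * x j) Finset.univ
    _ ≤ ∑ j, M i j * (c * y j) := by
        apply Finset.sum_le_sum
        intro j _
        rw [abs_mul, abs_of_nonneg (hM i j)]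
        exact mul_le_mul_of_nonneg_left (hxle j) (hM i j)
    _ = c * M.mulVec y i := by
        simp only [Matrix.mulVec, dotProduct, Finset.mul_sum]
        exact Finset.sum_congr rfl fun j _ => by ring
    _ ≤ c * (ρ * y i) := mul_le_mul_of_nonneg_left (hMy i) hcpos.le
    _ = ρ * (c * y i) := by ring
  have := le_of_mul_le_mul_right (by simpa [mul_comm] using key)
    (mul_pos hcpos (hy i))
  exact (le_abs_self s).trans this

lemma entry_nonneg {V : Type*} [Fintype V] (G : SimpleGraph V) (α : ℝ)
    (h0 : 0 ≤ α) (h1 : α ≤ 1) : ∀ u v, 0 ≤ Aalpha G α u v := by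
  intro u v
  simp only [Aalpha, Matrix.add_apply, Matrix.smul_apply, smul_eq_mul,
    Matrix.diagonal_apply, Matrix.of_apply]
  apply add_nonneg
  · apply mul_nonneg h0; split <;> positivity
  · apply mul_nonneg (by linarith); split <;> norm_num

theorem stmt1 (a b : ℕ) (hb : 1 ≤ b) (hab : b ≤ a) (α : ℝ) (hα : α ∈ Set.Icc (0:ℝ) 1)
    (r : ℝ)
    (hr : IsLargestEigenvalue (Aalpha (completeBipartiteGraph (Fin a) (Fin b)) α) r) :
    r = (α * (a + b) + Real.sqrt (α ^ 2 * (a + b) ^ 2 + 4 * a * b * (1 - 2 * α))) / 2 := by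
  obtain ⟨hα0, hα1⟩ := hα
  have ha1 : 1 ≤ a := hb.trans hab
  have haR : (1:ℝ) ≤ (a:ℝ) := by exact_mod_cast ha1
  have hbR : (1:ℝ) ≤ (b:ℝ) := by exact_mod_cast hb
  have habR : (b:ℝ) ≤ (a:ℝ) := by exact_mod_cast hab
  haveI : Nonempty (Fin a ⊕ Fin b) := ⟨Sum.inl ⟨0, ha1⟩⟩
  have hnn := entry_nonneg (completeBipartiteGraph (Fin a) (Fin b)) α hα0 hα1
  set D : ℝ := α ^ 2 * ((a:ℝ) + b) ^ 2 + 4 * a * b * (1 - 2 * α) with hDdef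
  have hDalt : D = (α * ((a:ℝ) - b)) ^ 2 + 4 * a * b * (1 - α) ^ 2 := by
    rw [hDdef]; ring
  have hD : 0 ≤ D := by rw [hDalt]; positivity
  have hsq : Real.sqrt D ^ 2 = D := Real.sq_sqrt hD
  set ρ : ℝ := (α * ((a:ℝ) + b) + Real.sqrt D) / 2 with hρdef
  have hquad : ρ ^ 2 - α * ((a:ℝ) + b) * ρ + a * b * (2 * α - 1) = 0 := by
    rw [hρdef]
    linear_combination hsq / 4 + hDdef / 4
  rcases eq_or_lt_of_le hα1 with hα1' | hα1'
  · -- α = 1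
    subst hα1'
    have hρa : ρ = a := by
      have hDval : D = ((a:ℝ) - b) ^ 2 := by rw [hDalt]; ring
      have hsD : Real.sqrt D = (a:ℝ) - b := by
        rw [hDval, Real.sqrt_sq (by linarith)]
      rw [hρdef, hsD]; ring
    rw [hρa]
    have hle : r ≤ (a:ℝ) := by
      obtain ⟨x, hx0, hx⟩ := hr.1
      refine eig_le _ hnn (fun _ => 1) (fun _ => one_pos) a ?_ r x hx0 hx
      rintro (i | j)
      · rw [mulVec_inl]; simp; linarith
      · rw [mulVec_inr]; simp; try linarith
    have hge : (a:ℝ) ≤ r := by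
      apply hr.2
      refine ⟨fun v => if v = Sum.inr ⟨0, hb⟩ then 1 else 0, ?_, ?_⟩
      · intro h
        have := congrFun h (Sum.inr ⟨0, hb⟩)
        simp at this
      · funext v
        rcases v with i | j
        · rw [mulVec_inl]; simp
        · rw [mulVec_inr]
          simp only [Pi.smul_apply, smul_eq_mul]
          ring
    linarith
  · -- α < 1
    have hDpos : 0 < D := by
      rw [hDalt]
      have h4 : 0 < 4 * (a:ℝ) * b * (1 - α) ^ 2 := by
        have : (0:ℝ) < 1 - α := by linarith
        positivity
      nlinarith [sq_nonneg (α * ((a:ℝ) - b))]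
    have hs : 0 < Real.sqrt D := Real.sqrt_pos.mpr hDpos
    have hyR : 0 < ρ - α * b := by
      rw [hρdef]
      nlinarith [mul_nonneg hα0 (sub_nonneg.mpr habR)]
    have hyL : 0 < (1 - α) * b := mul_pos (by linarith) (by linarith)
    set y : Fin a ⊕ Fin b → ℝ :=
      Sum.elim (fun _ => (1 - α) * b) (fun _ => ρ - α * b) with hydef
    have hy : ∀ v, 0 < y v := by rintro (i | j); exacts [hyL, hyR]
    have hMy : (Aalpha (completeBipartiteGraph (Fin a) (Fin b)) α).mulVec y = ρ • y := by
      funext v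
      rcases v with i | j
      · rw [mulVec_inl]
        simp only [hydef, Pi.smul_apply, smul_eq_mul, Sum.elim_inl, Sum.elim_inr,
          Finset.sum_const, Finset.card_univ, Fintype.card_fin, nsmul_eq_mul]
        ring
      · rw [mulVec_inr]
        simp only [hydef, Pi.smul_apply, smul_eq_mul, Sum.elim_inl, Sum.elim_inr,
          Finset.sum_const, Finset.card_univ, Fintype.card_fin, nsmul_eq_mul]
        linear_combination (-1 : ℝ) * hquad
    have hy0 : y ≠ 0 := by
      intro h
      have h2 := congrFun h (Sum.inl ⟨0, ha1⟩)
      simp only [hydef, Sum.elim_inl, Pi.zero_apply] at h2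
      nlinarith
    have hle : r ≤ ρ := by
      obtain ⟨x, hx0, hx⟩ := hr.1
      exact eig_le _ hnn y hy ρ (fun i => le_of_eq (by rw [hMy]; simp)) r x hx0 hx
    have hge : ρ ≤ r := hr.2 ρ ⟨y, hy0, hMy⟩
    linarith
end

section
/- If G is a minimally 2-edge-connected graph on n vertices, then the number of edges of G is at most 2n − 2. -/
open scoped Classical

section TwoECAux

open SimpleGraph

variable {V : Type*}

/-- Subgraphs (vertex set, edge set) built from a cycle by adding nontrivial ears. -/
inductive GoodSub (G : SimpleGraph V) : Finset V → Finset (Sym2 V) → Prop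
  | base {u : V} (p : G.Walk u u) (hp : p.IsCycle) :
      GoodSub G p.support.toFinset p.edges.toFinset
  | ear {S : Finset V} {F : Finset (Sym2 V)} (hSF : GoodSub G S F) {u v : V} (p : G.Walk u v)
      (hu : u ∈ S) (hv : v ∈ S) (hlen : 2 ≤ p.length)
      (htrail : p.edges.Nodup)
      (hFdisj : ∀ e ∈ p.edges, e ∉ F)
      (hLnodup : p.support.tail.dropLast.Nodup)
      (hLS : ∀ w ∈ p.support.tail.dropLast, w ∉ S) :
      GoodSub G (S ∪ p.support.tail.dropLast.toFinset) (F ∪ p.edges.toFinset)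

namespace TwoECAux

variable {G : SimpleGraph V}

lemma walk_tail_decomp {u v : V} (p : G.Walk u v) (h : 1 ≤ p.length) :
    p.support.tail.dropLast ++ [v] = p.support.tail := by
  cases p with
  | nil => simp at h
  | cons hadj q =>
    simp only [SimpleGraph.Walk.support_cons, List.tail_cons]
    have hthis := List.dropLast_append_getLast q.support_ne_nil
    have h2 : q.support.getLast q.support_ne_nil = v := q.getLast_support
    rw [h2] at hthis
    exact hthis

lemma walk_support_subset_decomp {u v : V} (p : G.Walk u v) (h : 1 ≤ p.length) :
    ∀ x ∈ p.support, x = u ∨ x ∈ p.support.tail.dropLast ∨ x = v := by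
  intro x hx
  rw [SimpleGraph.Walk.support_eq_cons p] at hx
  rcases List.mem_cons.mp hx with h1 | h1
  · exact Or.inl h1
  · rw [← walk_tail_decomp p h] at h1
    rcases List.mem_append.mp h1 with h2 | h2
    · exact Or.inr (Or.inl h2)
    · simp at h2; exact Or.inr (Or.inr h2)

lemma goodSub_edges_subset {S F} (h : GoodSub G S F) : ∀ e ∈ F, e ∈ G.edgeSet := by
  induction h with
  | base p hp =>
    intro e he
    exact p.edges_subset_edgeSet (List.mem_toFinset.mp he)
  | ear hSF p hu hv hlen htrail hFdisj hLnodup hLS ih =>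
    intro e he
    rcases Finset.mem_union.mp he with h1 | h1
    · exact ih e h1
    · exact p.edges_subset_edgeSet (List.mem_toFinset.mp h1)

lemma goodSub_endpoints_mem {S F} (h : GoodSub G S F) :
    ∀ e ∈ F, ∀ a ∈ e, a ∈ S := by
  induction h with
  | base p hp =>
    intro e he a ha
    refine List.mem_toFinset.mpr ?_
    induction e with
    | _ x y =>
      rcases Sym2.mem_iff.mp ha with rfl | rfl
      · exact p.fst_mem_support_of_mem_edges (List.mem_toFinset.mp he)
      · exact p.snd_mem_support_of_mem_edges (List.mem_toFinset.mp he)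
  | ear hSF p hu hv hlen htrail hFdisj hLnodup hLS ih =>
    intro e he a ha
    rcases Finset.mem_union.mp he with h1 | h1
    · exact Finset.mem_union_left _ (ih e h1 a ha)
    · have hsup : a ∈ p.support := by
        induction e with
        | _ x y =>
          rcases Sym2.mem_iff.mp ha with rfl | rfl
          · exact p.fst_mem_support_of_mem_edges (List.mem_toFinset.mp h1)
          · exact p.snd_mem_support_of_mem_edges (List.mem_toFinset.mp h1)
      rcases walk_support_subset_decomp p (by omega) a hsup with rfl | h2 | rfl
      · exact Finset.mem_union_left _ hu
      · exact Finset.mem_union_right _ (List.mem_toFinset.mpr h2)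
      · exact Finset.mem_union_left _ hv

lemma goodSub_card {S F} (h : GoodSub G S F) : F.card + 3 ≤ 2 * S.card := by
  induction h with
  | @base u p hp =>
    have h3 := hp.three_le_length
    have hF : p.edges.toFinset.card = p.length := by
      rw [List.toFinset_card_of_nodup hp.isTrail.edges_nodup, p.length_edges]
    have h1 : 1 ≤ p.length := by omega
    have hu_mem : u ∈ p.support.tail := by
      have hd := walk_tail_decomp p h1
      have hm : u ∈ p.support.tail.dropLast ++ [u] :=
        List.mem_append_right _ (List.mem_singleton_self _)
      rwa [hd] at hm
    have hS : p.support.toFinset = p.support.tail.toFinset := by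
      rw [SimpleGraph.Walk.support_eq_cons p, List.toFinset_cons]
      exact Finset.insert_eq_self.mpr (List.mem_toFinset.mpr hu_mem)
    have hScard : p.support.toFinset.card = p.length := by
      rw [hS, List.toFinset_card_of_nodup hp.support_nodup]
      have := p.length_support
      simp only [List.length_tail]
      omega
    rw [hF, hScard]
    omega
  | @ear S F hSF u v p hu hv hlen htrail hFdisj hLnodup hLS ih =>
    have hFd : Disjoint F p.edges.toFinset := by
      rw [Finset.disjoint_right]
      intro e he
      exact hFdisj e (List.mem_toFinset.mp he)
    have hSd : Disjoint S p.support.tail.dropLast.toFinset := by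
      rw [Finset.disjoint_right]
      intro w hw
      exact hLS w (List.mem_toFinset.mp hw)
    rw [Finset.card_union_of_disjoint hFd, Finset.card_union_of_disjoint hSd]
    have hFc : p.edges.toFinset.card = p.length := by
      rw [List.toFinset_card_of_nodup htrail, p.length_edges]
    have hLc : p.support.tail.dropLast.toFinset.card = p.length - 1 := by
      rw [List.toFinset_card_of_nodup hLnodup]
      have := p.length_support
      simp only [List.length_dropLast, List.length_tail]
      omega
    rw [hFc, hLc]
    omega

end TwoECAux
end TwoECAux

section Part2
open SimpleGraph
variable {G : SimpleGraph V}
namespace TwoECAux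

lemma walk_reach_aux {H : SimpleGraph V} {g : Sym2 V} :
    ∀ {u v : V} (p : G.Walk u v), (∀ e ∈ p.edges, e ≠ g → e ∈ H.edgeSet) → p.edges.Nodup →
      ∀ x ∈ p.support, H.Reachable x u ∨ H.Reachable x v := by
  intro u v p
  induction p with
  | nil =>
    intro _ _ x hx
    simp only [SimpleGraph.Walk.support_nil, List.mem_singleton] at hx
    subst hx
    exact Or.inl (Reachable.refl _)
  | @cons a b c hadj q ih =>
    intro hcond hnodup x hx
    rw [SimpleGraph.Walk.support_cons] at hx
    rcases List.mem_cons.mp hx with rfl | hx'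
    · exact Or.inl (Reachable.refl _)
    · have hq : ∀ e ∈ q.edges, e ≠ g → e ∈ H.edgeSet := fun e he hne =>
        hcond e (by simp [he]) hne
      have hnodup' : s(a, b) ∉ q.edges ∧ q.edges.Nodup := by
        rw [SimpleGraph.Walk.edges_cons] at hnodup
        exact List.nodup_cons.mp hnodup
      rcases ih hq hnodup'.2 x hx' with h1 | h1
      · by_cases hg : s(a, b) = g
        · have hall : ∀ e ∈ q.edges, e ∈ H.edgeSet := by
            intro e he
            refine hq e he ?_
            intro hne
            rw [hne, ← hg] at he
            exact hnodup'.1 he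
          exact Or.inr (h1.trans (q.transfer H hall).reachable)
        · have hHadj : H.Adj a b := (SimpleGraph.mem_edgeSet _).mp
            (hcond _ (by simp) hg)
          exact Or.inl (h1.trans hHadj.symm.reachable)
      · exact Or.inr h1

lemma goodSub_reach {S F} (h : GoodSub G S F) (g : Sym2 V) :
    ∀ x ∈ S, ∀ y ∈ S,
      (SimpleGraph.fromEdgeSet (↑(F.erase g) : Set (Sym2 V))).Reachable x y := by
  induction h with
  | @base u p hp =>
    have hcond : ∀ e ∈ p.edges, e ≠ g →
        e ∈ (SimpleGraph.fromEdgeSet (↑(p.edges.toFinset.erase g) : Set (Sym2 V))).edgeSet := by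
      intro e he hne
      rw [SimpleGraph.edgeSet_fromEdgeSet]
      refine ⟨?_, G.not_isDiag_of_mem_edgeSet (p.edges_subset_edgeSet he)⟩
      simp only [Finset.coe_erase, Set.mem_diff, Finset.mem_coe, List.mem_toFinset,
        Set.mem_singleton_iff]
      exact ⟨he, hne⟩
    intro x hx y hy
    have hx' := walk_reach_aux p hcond hp.isTrail.edges_nodup x (List.mem_toFinset.mp hx)
    have hy' := walk_reach_aux p hcond hp.isTrail.edges_nodup y (List.mem_toFinset.mp hy)
    have hx'' : _ := hx'.elim id id
    have hy'' : _ := hy'.elim id id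
    exact hx''.trans hy''.symm
  | @ear S F hSF u v p hu hv hlen htrail hFdisj hLnodup hLS ih =>
    have hmono : SimpleGraph.fromEdgeSet (↑(F.erase g) : Set (Sym2 V)) ≤
        SimpleGraph.fromEdgeSet (↑((F ∪ p.edges.toFinset).erase g) : Set (Sym2 V)) := by
      apply SimpleGraph.fromEdgeSet_mono
      intro e he
      simp only [Finset.coe_erase, Set.mem_diff, Finset.mem_coe, Finset.mem_union] at he ⊢
      tauto
    have hcond : ∀ e ∈ p.edges, e ≠ g →
        e ∈ (SimpleGraph.fromEdgeSet
          (↑((F ∪ p.edges.toFinset).erase g) : Set (Sym2 V))).edgeSet := by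
      intro e he hne
      rw [SimpleGraph.edgeSet_fromEdgeSet]
      refine ⟨?_, G.not_isDiag_of_mem_edgeSet (p.edges_subset_edgeSet he)⟩
      simp only [Finset.coe_erase, Set.mem_diff, Finset.mem_coe, Finset.mem_union,
        List.mem_toFinset, Set.mem_singleton_iff]
      exact ⟨Or.inr he, hne⟩
    have key : ∀ x ∈ S ∪ p.support.tail.dropLast.toFinset,
        (SimpleGraph.fromEdgeSet
          (↑((F ∪ p.edges.toFinset).erase g) : Set (Sym2 V))).Reachable x u := by
      intro x hx
      rcases Finset.mem_union.mp hx with h1 | h1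
      · exact (ih x h1 u hu).mono hmono
      · have hxs : x ∈ p.support := by
          have h2 : x ∈ p.support.tail := (List.dropLast_sublist _).subset (List.mem_toFinset.mp h1)
          rw [SimpleGraph.Walk.support_eq_cons p]
          exact List.mem_cons_of_mem _ h2
        rcases walk_reach_aux p hcond htrail x hxs with h2 | h2
        · exact h2
        · exact h2.trans ((ih v hv u hu).mono hmono)
    intro x hx y hy
    exact (key x hx).trans (key y hy).symm

end TwoECAux
end Part2


section TwoECMain
open SimpleGraph
variable {V : Type*} {G : SimpleGraph V}
namespace TwoECAux

lemma getLast_not_mem_dropLast {α : Type*} {l : List α} (h : l.Nodup) (hne : l ≠ []) :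
    l.getLast hne ∉ l.dropLast := by
  intro hmem
  have hdecomp := List.dropLast_append_getLast hne
  rw [← hdecomp] at h
  exact (List.disjoint_of_nodup_append h) hmem (List.mem_singleton_self _)

lemma exists_boundary {S : Finset V} :
    ∀ {a b : V} (_ : G.Walk a b), a ∈ S → b ∉ S → ∃ x y, x ∈ S ∧ y ∉ S ∧ G.Adj x y := by
  intro a b p
  induction p with
  | nil => intro h1 h2; exact absurd h1 h2
  | @cons a c b hadj q ih =>
    intro h1 h2
    by_cases hc : c ∈ S
    · exact ih hc h2
    · exact ⟨a, c, h1, hc, hadj⟩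

lemma exists_firstHit {H : SimpleGraph V} {S : Finset V} :
    ∀ {y u : V} (W : H.Walk y u), y ∉ S → u ∈ S →
      ∃ (z : V) (Q : H.Walk y z), z ∈ S ∧ ∀ w ∈ Q.support, w ∈ S → w = z := by
  intro y u W
  induction W with
  | nil => intro h1 h2; exact absurd h2 h1
  | @cons y b u hadj q ih =>
    intro h1 h2
    by_cases hb : b ∈ S
    · refine ⟨b, hadj.toWalk, hb, ?_⟩
      intro w hw hwS
      simp only [SimpleGraph.Adj.toWalk, SimpleGraph.Walk.support_cons,
        SimpleGraph.Walk.support_nil, List.mem_cons, List.mem_singleton] at hw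
      rcases hw with rfl | rfl | h
      · exact absurd hwS h1
      · rfl
      · exact absurd h (by simp)
    · obtain ⟨z, Q, hz, hprop⟩ := ih hb h2
      refine ⟨z, SimpleGraph.Walk.cons hadj Q, hz, ?_⟩
      intro w hw hwS
      rw [SimpleGraph.Walk.support_cons] at hw
      rcases List.mem_cons.mp hw with rfl | hw'
      · exact absurd hwS h1
      · exact hprop w hw' hwS

end TwoECAux
end TwoECMain


section FinalThm
open SimpleGraph TwoECAux

theorem stmt3 {V : Type*} [Fintype V] (G : SimpleGraph V) [DecidableRel G.Adj]
    (hG : MinimallyTwoEdgeConnected G) :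
    G.edgeFinset.card ≤ 2 * Fintype.card V - 2 := by
  classical
  obtain ⟨⟨hcard, hconn, hdel⟩, hmin⟩ := hG
  have hneV : Nonempty V := hconn.nonempty
  -- there is an adjacent pair
  have hadj : ∃ x y : V, G.Adj x y := by
    obtain ⟨a⟩ := hneV
    have h2 : 1 < Fintype.card V := by omega
    obtain ⟨b, hb⟩ := Fintype.exists_ne_of_one_lt_card h2 a
    obtain ⟨p⟩ := hconn.preconnected b a
    cases p with
    | nil => exact absurd rfl hb
    | cons h q => exact ⟨_, _, h⟩
  -- every edge lies on a cycle
  have hcycle : ∀ x y : V, G.Adj x y →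
      ∃ (u : V) (p : G.Walk u u), p.IsCycle ∧ s(x, y) ∈ p.edges := by
    intro x y hxy
    apply (SimpleGraph.adj_and_reachable_delete_edges_iff_exists_cycle).mp
    refine ⟨hxy, ?_⟩
    have hc := hdel s(x, y) hxy
    exact hc.preconnected x y
  -- initial GoodSub
  obtain ⟨x0, y0, hxy0⟩ := hadj
  obtain ⟨u0, p0, hp0, -⟩ := hcycle x0 y0 hxy0
  have h0 : GoodSub G p0.support.toFinset p0.edges.toFinset := GoodSub.base p0 hp0
  -- maximal GoodSub
  set A : Set ℕ := {n | ∃ S F, GoodSub G S F ∧ S.card + F.card = n} with hA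
  have hAne : A.Nonempty := ⟨_, _, _, h0, rfl⟩
  have hAbdd : BddAbove A := by
    refine ⟨Fintype.card V + Fintype.card (Sym2 V), ?_⟩
    rintro n ⟨S, F, hSF, rfl⟩
    have h1 : S.card ≤ Fintype.card V := by
      simpa using Finset.card_le_univ S
    have h2 : F.card ≤ Fintype.card (Sym2 V) := by
      simpa using Finset.card_le_univ F
    omega
  obtain ⟨S, F, hSF, hsum⟩ : sSup A ∈ A := Nat.sSup_mem hAne hAbdd
  have hmax : ∀ S' F', GoodSub G S' F' → S'.card + F'.card ≤ S.card + F.card := by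
    intro S' F' h'
    rw [hsum]
    exact le_csSup hAbdd ⟨S', F', h', rfl⟩
  -- S is everything
  have hSuniv : S = Finset.univ := by
    by_contra hne
    obtain ⟨t, ht⟩ : ∃ t, t ∉ S := by
      by_contra hall
      push_neg at hall
      exact hne (Finset.eq_univ_iff_forall.mpr hall)
    have hS1 : S.Nonempty := by
      rw [← Finset.card_pos]
      have := goodSub_card hSF
      omega
    obtain ⟨s0, hs0⟩ := hS1
    obtain ⟨W⟩ := hconn.preconnected s0 t
    obtain ⟨x, y, hxS, hyS, hxy⟩ := exists_boundary W hs0 ht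
    have he : s(x, y) ∈ G.edgeSet := hxy
    have hcdel : (G.deleteEdges {s(x, y)}).Connected := hdel _ he
    obtain ⟨W2⟩ := hcdel.preconnected y x
    obtain ⟨z, Q, hz, hprop⟩ := exists_firstHit W2 hyS hxS
    set P := Q.toPath with hP
    have hPpath : (↑P : (G.deleteEdges {s(x, y)}).Walk y z).IsPath := P.2
    have hPsup : ∀ w ∈ (↑P : (G.deleteEdges {s(x, y)}).Walk y z).support, w ∈ S → w = z :=
      fun w hw => hprop w (Q.support_toPath_subset hw)
    have hedges : ∀ e ∈ (↑P : (G.deleteEdges {s(x, y)}).Walk y z).edges, e ∈ G.edgeSet := by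
      intro e he'
      have := (↑P : (G.deleteEdges {s(x, y)}).Walk y z).edges_subset_edgeSet he'
      rw [SimpleGraph.edgeSet_deleteEdges] at this
      exact this.1
    have hPnotE : s(x, y) ∉ (↑P : (G.deleteEdges {s(x, y)}).Walk y z).edges := by
      intro hmem
      have := (↑P : (G.deleteEdges {s(x, y)}).Walk y z).edges_subset_edgeSet hmem
      rw [SimpleGraph.edgeSet_deleteEdges] at this
      exact this.2 rfl
    set Qg : G.Walk y z := (↑P : (G.deleteEdges {s(x, y)}).Walk y z).transfer G hedges with hQg
    have hQgsup : Qg.support = (↑P : (G.deleteEdges {s(x, y)}).Walk y z).support :=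
      SimpleGraph.Walk.support_transfer _ _
    have hQgedges : Qg.edges = (↑P : (G.deleteEdges {s(x, y)}).Walk y z).edges :=
      SimpleGraph.Walk.edges_transfer _ _
    have hyz : y ≠ z := fun h => hyS (h ▸ hz)
    have hQglen : 1 ≤ Qg.length := by
      rcases Nat.eq_zero_or_pos Qg.length with h0' | h0'
      · exact absurd (SimpleGraph.Walk.eq_of_length_eq_zero h0') hyz
      · omega
    set EW : G.Walk x z := SimpleGraph.Walk.cons hxy Qg with hEW
    have hEWsupt : EW.support.tail = Qg.support := by
      rw [hEW, SimpleGraph.Walk.support_cons]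
      rfl
    have hPsnodup : (↑P : (G.deleteEdges {s(x, y)}).Walk y z).support.Nodup := hPpath.support_nodup
    have hzlast : (↑P : (G.deleteEdges {s(x, y)}).Walk y z).support.getLast
        (SimpleGraph.Walk.support_ne_nil _) = z := SimpleGraph.Walk.getLast_support _
    have hznot : z ∉ (↑P : (G.deleteEdges {s(x, y)}).Walk y z).support.dropLast := by
      have := getLast_not_mem_dropLast hPsnodup (SimpleGraph.Walk.support_ne_nil
        (↑P : (G.deleteEdges {s(x, y)}).Walk y z))
      rwa [hzlast] at this
    have hSF' : GoodSub G (S ∪ EW.support.tail.dropLast.toFinset)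
        (F ∪ EW.edges.toFinset) := by
      refine GoodSub.ear hSF EW hxS hz ?_ ?_ ?_ ?_ ?_
      · -- length
        rw [hEW, SimpleGraph.Walk.length_cons]
        omega
      · -- trail
        rw [hEW, SimpleGraph.Walk.edges_cons, List.nodup_cons, hQgedges]
        exact ⟨hPnotE, hPpath.isTrail.edges_nodup⟩
      · -- disjoint from F
        intro e hmem heF
        have hends := goodSub_endpoints_mem hSF e heF
        rw [hEW, SimpleGraph.Walk.edges_cons] at hmem
        rcases List.mem_cons.mp hmem with rfl | hmem'
        · exact hyS (hends y (by simp))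
        · rw [hQgedges] at hmem'
          induction e with
          | _ c d =>
            have hc : c ∈ (↑P : (G.deleteEdges {s(x, y)}).Walk y z).support :=
              SimpleGraph.Walk.fst_mem_support_of_mem_edges _ hmem'
            have hd : d ∈ (↑P : (G.deleteEdges {s(x, y)}).Walk y z).support :=
              SimpleGraph.Walk.snd_mem_support_of_mem_edges _ hmem'
            have hcz : c = z := hPsup c hc (hends c (by simp))
            have hdz : d = z := hPsup d hd (hends d (by simp))
            have : G.Adj c d := (↑P : (G.deleteEdges {s(x, y)}).Walk y z).transfer G hedges
              |>.edges_subset_edgeSet (hQgedges ▸ hmem')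
            rw [hcz, hdz] at this
            exact G.irrefl this
      · -- Nodup of internal list
        rw [hEWsupt, hQgsup]
        exact hPsnodup.sublist (List.dropLast_sublist _)
      · -- internal vertices not in S
        intro w hw
        rw [hEWsupt, hQgsup] at hw
        intro hwS
        have hwsup : w ∈ (↑P : (G.deleteEdges {s(x, y)}).Walk y z).support :=
          (List.dropLast_sublist _).subset hw
        have := hPsup w hwsup hwS
        rw [this] at hw
        exact hznot hw
    -- contradiction with maximality
    have hymem : y ∈ EW.support.tail.dropLast := by
      rw [hEWsupt, hQgsup]
      have hy1 : y ∈ (↑P : (G.deleteEdges {s(x, y)}).Walk y z).support :=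
        SimpleGraph.Walk.start_mem_support _
      have hdecomp := List.dropLast_append_getLast
        (SimpleGraph.Walk.support_ne_nil (↑P : (G.deleteEdges {s(x, y)}).Walk y z))
      rw [hzlast] at hdecomp
      rw [← hdecomp] at hy1
      rcases List.mem_append.mp hy1 with h' | h'
      · exact h'
      · exact absurd (List.mem_singleton.mp h') hyz
    have hss : S ⊂ S ∪ EW.support.tail.dropLast.toFinset := by
      refine Finset.ssubset_iff_subset_ne.mpr ⟨Finset.subset_union_left, ?_⟩
      intro hEq
      have : y ∈ S := by
        rw [hEq]
        exact Finset.mem_union_right _ (List.mem_toFinset.mpr hymem)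
      exact hyS this
    have h1 := Finset.card_lt_card hss
    have h2 : F.card ≤ (F ∪ EW.edges.toFinset).card :=
      Finset.card_le_card Finset.subset_union_left
    have h3 := hmax _ _ hSF'
    omega
  -- F is all edges
  have hFsub : F ⊆ G.edgeFinset := fun e he =>
    SimpleGraph.mem_edgeFinset.mpr (goodSub_edges_subset hSF e he)
  have hle2 : ∀ e g : Sym2 V, e ∉ F →
      SimpleGraph.fromEdgeSet (↑(F.erase g) : Set (Sym2 V)) ≤ G.deleteEdges ({e} ∪ {g}) := by
    intro e g heF a b hab
    rw [SimpleGraph.fromEdgeSet_adj] at hab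
    obtain ⟨hmem, hne⟩ := hab
    rw [Finset.coe_erase, Set.mem_diff] at hmem
    have h1 : s(a, b) ∈ F := Finset.mem_coe.mp hmem.1
    have h2 : s(a, b) ≠ g := by simpa using hmem.2
    have hadj' : G.Adj a b := (SimpleGraph.mem_edgeSet _).mp (goodSub_edges_subset hSF _ h1)
    have h3 : s(a, b) ≠ e := fun h => heF (h ▸ h1)
    rw [SimpleGraph.deleteEdges_adj]
    refine ⟨hadj', ?_⟩
    simp only [Set.mem_union, Set.mem_singleton_iff]
    tauto
  have hFsup : G.edgeFinset ⊆ F := by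
    intro e he'
    by_contra heF
    have heE : e ∈ G.edgeSet := SimpleGraph.mem_edgeFinset.mp he'
    refine hmin e heE ⟨hcard, ?_, ?_⟩
    · -- Connected (G.deleteEdges {e})
      rw [SimpleGraph.connected_iff]
      refine ⟨fun a b => ?_, hneV⟩
      have hr := goodSub_reach hSF e a (hSuniv ▸ Finset.mem_univ a) b (hSuniv ▸ Finset.mem_univ b)
      have : G.deleteEdges ({e} ∪ {e}) = G.deleteEdges {e} := by
        rw [Set.union_self]
      exact this ▸ (hr.mono (hle2 e e heF))
    · intro g hg
      rw [SimpleGraph.deleteEdges_deleteEdges, SimpleGraph.connected_iff]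
      refine ⟨fun a b => ?_, hneV⟩
      have hr := goodSub_reach hSF g a (hSuniv ▸ Finset.mem_univ a) b (hSuniv ▸ Finset.mem_univ b)
      exact hr.mono (hle2 e g heF)
  have hFeq : F = G.edgeFinset := Finset.Subset.antisymm hFsub hFsup
  have hcount := goodSub_card hSF
  rw [hFeq, hSuniv, Finset.card_univ] at hcount
  omega

end FinalThm
end

section
/- If G is a minimally 2-edge-connected graph, then no cycle of G has a chord; that is, for every cycle C in G, no edge of G joins two non-adjacent vertices of C. -/
open scoped Classical

open SimpleGraph in
private lemma connected_deleteEdges_of_reachable_aux {V : Type*} (G : SimpleGraph V) {x y : V}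
    (hc : G.Connected) (hr : (G.deleteEdges {s(x, y)}).Reachable x y) :
    (G.deleteEdges {s(x, y)}).Connected := by
  have hne : Nonempty V := hc.nonempty
  refine Connected.mk fun u w => ?_
  obtain ⟨p⟩ := hc.preconnected u w
  induction p with
  | nil => exact Reachable.refl _
  | @cons a b w' h p ih =>
    by_cases he : s(a, b) = s(x, y)
    · rw [Sym2.eq_iff] at he
      have hab : (G.deleteEdges {s(x, y)}).Reachable a b := by
        rcases he with ⟨h1, h2⟩ | ⟨h1, h2⟩
        · subst h1; subst h2; exact hr
        · subst h1; subst h2; exact hr.symm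
      exact hab.trans ih
    · exact (Adj.reachable (by simp [he, h] : (G.deleteEdges {s(x, y)}).Adj a b)).trans ih

open SimpleGraph in
private lemma mem_tail_support_of_closed {V : Type*} {G : SimpleGraph V} {v y : V}
    {c : G.Walk v v} (hn : ¬ c.Nil) (hy : y ∈ c.support) : y ∈ c.support.tail := by
  cases c with
  | nil => exact absurd Walk.nil_nil hn
  | cons h p =>
    rw [Walk.support_cons] at hy
    rcases List.mem_cons.mp hy with rfl | hy
    · exact p.end_mem_support
    · exact hy


open SimpleGraph in
theorem stmt4 {V : Type*} [Fintype V] (G : SimpleGraph V)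
    (hG : MinimallyTwoEdgeConnected G) {v : V} (c : G.Walk v v) (hc : c.IsCycle) :
    ∀ x y : V, x ∈ c.support → y ∈ c.support → G.Adj x y → s(x, y) ∈ c.edges := by
  intro x y hx hy hadj
  by_contra hmem
  have he : s(x, y) ∈ G.edgeSet := hadj
  set d := c.rotate x hx with hd_def
  have hd : d.IsCycle := hc.rotate hx
  have hyd : y ∈ d.support := by
    have hyt : y ∈ c.support.tail := mem_tail_support_of_closed hc.not_nil hy
    have hrot := c.support_rotate x hx
    exact List.mem_of_mem_tail (hrot.mem_iff.mpr hyt)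
  have hed : s(x, y) ∉ d.edges := fun h => hmem ((c.rotate_edges x hx).mem_iff.mp h)
  set p := d.takeUntil y hyd with hp_def
  set q := d.dropUntil y hyd with hq_def
  have hedges : p.edges ++ q.edges = d.edges := by
    rw [← Walk.edges_append, Walk.take_spec]
  have hnodup : (p.edges ++ q.edges).Nodup := by
    rw [hedges]; exact hd.isTrail.edges_nodup
  have hdisj := List.disjoint_of_nodup_append hnodup
  -- key: for each f there is a walk from x to y avoiding e and f
  have key : ∀ f : Sym2 V, ∃ w : G.Walk x y, s(x, y) ∉ w.edges ∧ f ∉ w.edges := by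
    intro f
    by_cases hf : f ∈ p.edges
    · refine ⟨q.reverse, ?_, ?_⟩
      · rw [Walk.edges_reverse, List.mem_reverse]
        intro h; exact hed (hedges ▸ List.mem_append_right _ h)
      · rw [Walk.edges_reverse, List.mem_reverse]
        exact hdisj hf
    · refine ⟨p, ?_, hf⟩
      intro h; exact hed (hedges ▸ List.mem_append_left _ h)
  have reach : ∀ s : Set (Sym2 V), (∃ f₀, s ⊆ {s(x, y), f₀}) →
      (G.deleteEdges s).Reachable x y := by
    intro s ⟨f₀, hsub⟩
    obtain ⟨w, hw1, hw2⟩ := key f₀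
    refine ⟨w.transfer _ fun e' he' => ?_⟩
    rw [edgeSet_deleteEdges, Set.mem_diff]
    refine ⟨w.edges_subset_edgeSet he', fun hmem' => ?_⟩
    rcases hsub hmem' with rfl | rfl
    · exact hw1 he'
    · exact hw2 he'
  have h2ec : TwoEdgeConnected (G.deleteEdges {s(x, y)}) := by
    refine ⟨hG.1.1, ?_, ?_⟩
    · exact connected_deleteEdges_of_reachable_aux G hG.1.2.1
        (reach _ ⟨s(x, y), by simp⟩)
    · intro f hf
      have hfd : f ∈ (G.deleteEdges {s(x, y)}).edgeSet := hf
      rw [edgeSet_deleteEdges, Set.mem_diff, Set.mem_singleton_iff] at hfd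
      obtain ⟨hfG, hfe⟩ := hfd
      have hGf : (G.deleteEdges {f}).Connected := hG.1.2.2 f hfG
      have hr : ((G.deleteEdges {f}).deleteEdges {s(x, y)}).Reachable x y := by
        have := reach ({f} ∪ {s(x, y)})
          ⟨f, by
            intro a ha
            rcases ha with ha | ha
            · exact Or.inr ha
            · exact Or.inl ha⟩
        rwa [deleteEdges_deleteEdges]
      have := connected_deleteEdges_of_reachable_aux (G.deleteEdges {f}) hGf hr
      rwa [deleteEdges_deleteEdges, Set.union_comm, ← deleteEdges_deleteEdges] at this
  exact hG.2 _ he h2ec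
end

section
/- In a minimally 2-edge-connected graph G, for any vertex w, the induced subgraph G[N(w)] on the neighborhood of w is a disjoint union of edges and isolated vertices (i.e., every vertex of G[N(w)] has degree at most 1 in G[N(w)]). -/
open scoped Classical

private lemma reach_del' {V : Type*} {H : SimpleGraph V} {u w : V}
    (huw : (H.deleteEdges {s(u, w)}).Reachable u w) :
    ∀ {a b : V}, H.Reachable a b → (H.deleteEdges {s(u, w)}).Reachable a b := by
  intro a b hab
  obtain ⟨p⟩ := hab
  induction p with
  | nil => rfl
  | @cons c d b h p ih =>
    refine SimpleGraph.Reachable.trans ?_ ih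
    by_cases he : s(c, d) = s(u, w)
    · rw [Sym2.eq_iff] at he
      rcases he with ⟨rfl, rfl⟩ | ⟨rfl, rfl⟩
      · exact huw
      · exact huw.symm
    · exact SimpleGraph.Adj.reachable (SimpleGraph.deleteEdges_adj.mpr ⟨h, by simpa using he⟩)

private lemma conn_del' {V : Type*} {H : SimpleGraph V} {u w : V}
    (hc : H.Connected) (huw : (H.deleteEdges {s(u, w)}).Reachable u w) :
    (H.deleteEdges {s(u, w)}).Connected := by
  haveI := hc.nonempty
  exact ⟨fun a b => reach_del' huw (hc.preconnected a b)⟩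

theorem stmt6 {V : Type*} [Fintype V] (G : SimpleGraph V)
    (hG : MinimallyTwoEdgeConnected G) (w : V) :
    ∀ u ∈ G.neighborSet w, ((G.neighborSet u) ∩ (G.neighborSet w)).ncard ≤ 1 := by

  intro u hu
  rw [SimpleGraph.mem_neighborSet] at hu
  rw [Set.ncard_le_one_iff]
  rintro x y ⟨hux, hwx⟩ ⟨huy, hwy⟩
  rw [SimpleGraph.mem_neighborSet] at hux hwx huy hwy
  by_contra hxy
  -- key ne facts
  have huw : G.Adj u w := hu.symm
  have hxw : x ≠ w := fun h => G.loopless.irrefl w (h ▸ hwx.symm)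
  have hxu : x ≠ u := fun h => G.loopless.irrefl u (h ▸ hux.symm)
  have hyw : y ≠ w := fun h => G.loopless.irrefl w (h ▸ hwy.symm)
  have hyu : y ≠ u := fun h => G.loopless.irrefl u (h ▸ huy.symm)
  have hnuw := huw.ne
  -- reachability through x or y avoiding an edge set
  have hreach : ∀ (z : V), G.Adj u z → G.Adj w z → ∀ (S : Set (Sym2 V)),
      s(u, z) ∉ S → s(z, w) ∉ S → (G.deleteEdges S).Reachable u w := by
    intro z h1 h2 S hS1 hS2
    exact (SimpleGraph.Adj.reachable (SimpleGraph.deleteEdges_adj.mpr ⟨h1, hS1⟩)).trans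
      (SimpleGraph.Adj.reachable (SimpleGraph.deleteEdges_adj.mpr ⟨h2.symm, hS2⟩))
  apply hG.2 s(u, w) (G.mem_edgeSet.mpr huw)
  refine ⟨hG.1.1, ?_, ?_⟩
  · refine conn_del' hG.1.2.1 (hreach x hux hwx _ ?_ ?_)
    · simp [Sym2.eq_iff, hxw, hnuw]
    · simp [Sym2.eq_iff, hxu, hxw]
  · intro f hf
    rw [SimpleGraph.edgeSet_deleteEdges] at hf
    obtain ⟨hf1, hf2⟩ := hf
    have hGf : (G.deleteEdges {f}).Connected := hG.1.2.2 f hf1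
    have hr : ((G.deleteEdges {f}).deleteEdges {s(u, w)}).Reachable u w := by
      rw [SimpleGraph.deleteEdges_deleteEdges]
      by_cases hcase : f = s(u, x) ∨ f = s(x, w)
      · refine hreach y huy hwy _ ?_ ?_ <;>
          rcases hcase with rfl | rfl <;>
          simp [Sym2.eq_iff, hxw, hxu, hyw, hyu, hnuw, hxy, Ne.symm hxw, Ne.symm hxu,
            Ne.symm hyw, Ne.symm hyu, Ne.symm hnuw, Ne.symm hxy]
      · push_neg at hcase
        refine hreach x hux hwx _ ?_ ?_ <;>
          simp [Sym2.eq_iff, hxw, hxu, hnuw, Ne.symm hcase.1, Ne.symm hcase.2]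
    have hconn := conn_del' hGf hr
    have heq : (G.deleteEdges {s(u, w)}).deleteEdges {f}
        = (G.deleteEdges {f}).deleteEdges {s(u, w)} := by
      rw [SimpleGraph.deleteEdges_deleteEdges, SimpleGraph.deleteEdges_deleteEdges,
        Set.union_comm]
    rw [heq]
    exact hconn
end

section
/- For every graph G with no isolated vertices and α ∈ [0,1], the largest eigenvalue of A_α(G) satisfies ρ_α(G) ≤ max over vertices u of [α·d(u) + (1−α)/d(u) · Σ_{uv ∈ E(G)} d(v)]. -/
open scoped Classical

theorem stmt7 {V : Type*} [Fintype V] [Nonempty V] (G : SimpleGraph V) [DecidableRel G.Adj]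
    (h : ∀ v : V, 0 < G.degree v) (α : ℝ) (hα : α ∈ Set.Icc (0:ℝ) 1)
    (r : ℝ) (hr : IsLargestEigenvalue (Aalpha G α) r) :
    r ≤ Finset.univ.sup' Finset.univ_nonempty
      (fun u => α * G.degree u +
        (1 - α) / (G.degree u) * ∑ v ∈ G.neighborFinset u, (G.degree v : ℝ)) := by
  classical
  obtain ⟨⟨x, hx0, hxe⟩, -⟩ := hr
  have hdeg : ∀ w : V, ((G.neighborSet w).ncard : ℝ) = (G.degree w : ℝ) := by
    intro w
    rw [Set.ncard_eq_toFinset_card']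
    simp [SimpleGraph.neighborFinset, SimpleGraph.degree]
  have hdpos : ∀ w : V, (0:ℝ) < (G.degree w : ℝ) := by
    intro w; exact_mod_cast h w
  have hrow : ∀ w : V, (Aalpha G α).mulVec x w
      = α * (G.degree w : ℝ) * x w + (1-α) * ∑ v ∈ G.neighborFinset w, x v := by
    intro w
    unfold Aalpha
    rw [Matrix.add_mulVec]
    simp only [Matrix.smul_mulVec, Pi.add_apply, Pi.smul_apply, smul_eq_mul]
    congr 1
    · rw [Matrix.mulVec_diagonal, hdeg, mul_assoc]
    · congr 1
      unfold Matrix.mulVec dotProduct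
      simp only [Matrix.of_apply]
      rw [SimpleGraph.neighborFinset_eq_filter, Finset.sum_filter]
      refine Finset.sum_congr rfl fun v _ => ?_
      by_cases hwv : G.Adj w v <;> simp [hwv]
  set y : V → ℝ := fun v => x v / (G.degree v : ℝ) with hy
  have hxy : ∀ v : V, x v = (G.degree v : ℝ) * y v := by
    intro v
    have hne : ((G.degree v : ℝ)) ≠ 0 := (hdpos v).ne'
    simp only [hy]
    field_simp
  obtain ⟨u, -, hu⟩ := Finset.exists_max_image Finset.univ (fun v => |y v|)
    Finset.univ_nonempty
  have hyu : 0 < |y u| := by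
    by_contra hc
    push_neg at hc
    apply hx0
    funext v
    have h1 : |y v| ≤ 0 := le_trans (hu v (Finset.mem_univ v)) hc
    have h2 : y v = 0 := abs_eq_zero.mp (le_antisymm h1 (abs_nonneg _))
    show x v = 0
    rw [hxy v, h2, mul_zero]
  have key : α * (G.degree u : ℝ) * x u + (1-α) * ∑ v ∈ G.neighborFinset u, x v
      = r * x u := by
    have := congrFun hxe u
    rw [hrow u] at this
    simpa using this
  obtain ⟨hα0, hα1⟩ := hα
  have h1α : (0:ℝ) ≤ 1 - α := by linarith
  set du : ℝ := (G.degree u : ℝ) with hdu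
  set S : ℝ := ∑ v ∈ G.neighborFinset u, (G.degree v : ℝ) with hS
  have habs1 : |α * du * x u| = α * du * (du * |y u|) := by
    rw [hxy u]
    rw [abs_mul, abs_mul, abs_mul, abs_of_nonneg hα0, abs_of_pos (hdpos u)]
  have hbound : r * du * |y u| ≤ (α * du ^ 2 + (1-α) * S) * |y u| := by
    calc r * du * |y u| ≤ |r| * (du * |y u|) := by
          rw [← mul_assoc]
          exact mul_le_mul_of_nonneg_right (mul_le_mul_of_nonneg_right (le_abs_self r)
            (hdpos u).le) (abs_nonneg _)
      _ = |r * x u| := by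
          rw [hxy u, abs_mul, abs_mul, abs_of_pos (hdpos u)]
      _ = |α * du * x u + (1-α) * ∑ v ∈ G.neighborFinset u, x v| := by rw [key]
      _ ≤ |α * du * x u| + |(1-α) * ∑ v ∈ G.neighborFinset u, x v| := abs_add_le _ _
      _ ≤ α * du * (du * |y u|)
            + (1-α) * ∑ v ∈ G.neighborFinset u, (G.degree v : ℝ) * |y u| := by
          refine add_le_add (le_of_eq habs1) ?_
          rw [abs_mul, abs_of_nonneg h1α]
          refine mul_le_mul_of_nonneg_left ?_ h1α
          calc |∑ v ∈ G.neighborFinset u, x v| ≤ ∑ v ∈ G.neighborFinset u, |x v| :=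
              Finset.abs_sum_le_sum_abs _ _
            _ ≤ ∑ v ∈ G.neighborFinset u, (G.degree v : ℝ) * |y u| := by
                refine Finset.sum_le_sum fun v _ => ?_
                rw [hxy v, abs_mul, abs_of_pos (hdpos v)]
                exact mul_le_mul_of_nonneg_left (hu v (Finset.mem_univ v)) (hdpos v).le
      _ = (α * du ^ 2 + (1-α) * S) * |y u| := by
          rw [hS, ← Finset.sum_mul]
          ring
  have hmain : r * du ≤ α * du ^ 2 + (1-α) * S :=
    le_of_mul_le_mul_right hbound hyu
  have hdune : du ≠ 0 := (hdpos u).ne'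
  have hfu : r ≤ α * (G.degree u : ℝ) + (1-α) / (G.degree u : ℝ)
      * ∑ v ∈ G.neighborFinset u, (G.degree v : ℝ) := by
    show r ≤ α * du + (1-α) / du * S
    rw [← sub_nonneg]
    have heq : α * du + (1 - α) / du * S - r = (α * du ^ 2 + (1-α) * S - r * du) / du := by
      field_simp
    rw [heq]
    exact div_nonneg (by linarith) (hdpos u).le
  exact le_trans hfu (Finset.le_sup'
    (fun u => α * (G.degree u : ℝ) + (1 - α) / (G.degree u : ℝ)
      * ∑ v ∈ G.neighborFinset u, (G.degree v : ℝ)) (Finset.mem_univ u))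
end

section
/- In a minimally 3-connected graph G, for every vertex w and every neighbor u of w, the number of neighbors of u inside N(w) is at most 2. -/
open scoped Classical

lemma preconnected_of_adj_reachable' {V : Type*} {H G' : SimpleGraph V}
    (hH : H.Preconnected) (hadj : ∀ a b, H.Adj a b → G'.Reachable a b) :
    G'.Preconnected := by
  intro a b
  obtain ⟨p⟩ := hH a b
  induction p with
  | nil => exact SimpleGraph.Reachable.refl _
  | cons hadj' _ ih => exact (hadj _ _ hadj').trans ih

theorem stmt17 {V : Type*} [Fintype V] (G : SimpleGraph V)
    (hG : MinimallyThreeConnected G) (w u : V) (h : G.Adj w u) :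
    ((G.neighborSet u) ∩ (G.neighborSet w)).ncard ≤ 2 := by
  by_contra hcard
  push_neg at hcard
  obtain ⟨⟨hV, hconn⟩, hmin⟩ := hG
  have he : s(w, u) ∈ G.edgeSet := h
  have hnot := hmin _ he
  unfold ThreeConnected at hnot
  push_neg at hnot
  obtain ⟨s, hs2, hsdisc⟩ := hnot hV
  apply hsdisc
  have hHc : (G.induce sᶜ).Connected := hconn s hs2
  have hx : ∃ x ∈ G.neighborSet u ∩ G.neighborSet w, x ∉ s := by
    by_contra hx
    push_neg at hx
    have hle : (G.neighborSet u ∩ G.neighborSet w).ncard ≤ s.ncard :=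
      Set.ncard_le_ncard hx (Set.toFinite s)
    omega
  obtain ⟨x, ⟨hxu, hxw⟩, hxs⟩ := hx
  have hxu' : G.Adj u x := hxu
  have hxw' : G.Adj w x := hxw
  have hxmem : x ∈ (sᶜ : Set V) := hxs
  have hxadjw : (G.deleteEdges {s(w, u)}).Adj w x := by
    rw [SimpleGraph.deleteEdges_adj]
    refine ⟨hxw', ?_⟩
    simp only [Set.mem_singleton_iff, Sym2.eq_iff]
    rintro (⟨-, rfl⟩ | ⟨rfl, rfl⟩)
    · exact hxu'.ne rfl
    · exact hxw'.ne rfl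
  have hxadju : (G.deleteEdges {s(w, u)}).Adj u x := by
    rw [SimpleGraph.deleteEdges_adj]
    refine ⟨hxu', ?_⟩
    simp only [Set.mem_singleton_iff, Sym2.eq_iff]
    rintro (⟨rfl, rfl⟩ | ⟨-, rfl⟩)
    · exact hxu'.ne rfl
    · exact hxw'.ne rfl
  rw [SimpleGraph.connected_iff]
  constructor
  · refine preconnected_of_adj_reachable' hHc.preconnected ?_
    intro a b hab
    by_cases hcase : s(a.1, b.1) = s(w, u)
    · rw [Sym2.eq_iff] at hcase
      have hXb : (⟨x, hxmem⟩ : (sᶜ : Set V)) = ⟨x, hxmem⟩ := rfl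
      rcases hcase with ⟨haw, hbu⟩ | ⟨hau, hbw⟩
      · have r1 : ((G.deleteEdges {s(w, u)}).induce sᶜ).Adj a ⟨x, hxmem⟩ := by
          show (G.deleteEdges {s(w, u)}).Adj a.1 x
          rw [haw]; exact hxadjw
        have r2 : ((G.deleteEdges {s(w, u)}).induce sᶜ).Adj ⟨x, hxmem⟩ b := by
          show (G.deleteEdges {s(w, u)}).Adj x b.1
          rw [hbu]; exact hxadju.symm
        exact r1.reachable.trans r2.reachable
      · have r1 : ((G.deleteEdges {s(w, u)}).induce sᶜ).Adj a ⟨x, hxmem⟩ := by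
          show (G.deleteEdges {s(w, u)}).Adj a.1 x
          rw [hau]; exact hxadju
        have r2 : ((G.deleteEdges {s(w, u)}).induce sᶜ).Adj ⟨x, hxmem⟩ b := by
          show (G.deleteEdges {s(w, u)}).Adj x b.1
          rw [hbw]; exact hxadjw.symm
        exact r1.reachable.trans r2.reachable
    · have : ((G.deleteEdges {s(w, u)}).induce sᶜ).Adj a b := by
        show (G.deleteEdges {s(w, u)}).Adj a.1 b.1
        rw [SimpleGraph.deleteEdges_adj]
        exact ⟨hab, by simpa using hcase⟩
      exact this.reachable
  · exact hHc.nonempty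
end

section
/- Let G be a connected graph, α ∈ [0,1), u, v vertices of G, and N a nonempty subset of N(v) \ (N(u) ∪ {u}). Let G′ be obtained from G by deleting the edges vw for w ∈ N and adding the edges uw for w ∈ N. If the α-Perron vector X of G satisfies x_u ≥ x_v, then ρ_α(G′) > ρ_α(G). -/
open scoped Classical

section AuxLemmas

variable {V : Type*} [Fintype V]

lemma largest_psd' {n : Type*} [Fintype n] {M : Matrix n n ℝ}
    (hM : M.IsHermitian) {r : ℝ} (hr : IsLargestEigenvalue M r) :
    (r • (1 : Matrix n n ℝ) - M).PosSemidef := by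
  have hP : (r • (1 : Matrix n n ℝ) - M).IsHermitian := by
    have := hM.eq
    simp only [Matrix.IsHermitian, Matrix.conjTranspose_sub, Matrix.conjTranspose_smul,
      Matrix.conjTranspose_one, star_trivial, this]
  refine (Matrix.IsHermitian.posSemidef_iff_eigenvalues_nonneg hP).mpr fun i => ?_
  have hv := hP.mulVec_eigenvectorBasis i
  set v : n → ℝ := ⇑(hP.eigenvectorBasis i) with hvdef
  have hvne : v ≠ 0 := by
    intro h
    exact hP.eigenvectorBasis.toBasis.ne_zero i (by ext j; exact congrFun h j)
  have hMv : M.mulVec v = (r - hP.eigenvalues i) • v := by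
    have h2 : (r • (1 : Matrix n n ℝ) - M).mulVec v = hP.eigenvalues i • v := hv
    rw [Matrix.sub_mulVec, Matrix.smul_mulVec, Matrix.one_mulVec] at h2
    rw [sub_smul, ← h2]
    abel
  have := hr.2 (r - hP.eigenvalues i) ⟨v, hvne, hMv⟩
  rw [Pi.zero_apply]; linarith

lemma aalpha_isHermitian (G : SimpleGraph V) (α : ℝ) :
    (Aalpha G α).IsHermitian := by
  ext i j
  simp only [Aalpha, Matrix.conjTranspose_apply, Matrix.add_apply, Matrix.smul_apply,
    Matrix.of_apply, Matrix.diagonal_apply, star_trivial, smul_eq_mul]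
  rw [G.adj_comm]
  by_cases h : i = j <;> simp [h]
  · exact fun h' => absurd h'.symm h

lemma deg_eq_sum (G : SimpleGraph V) (i : V) :
    ((G.neighborSet i).ncard : ℝ) = ∑ j, (if G.Adj i j then (1:ℝ) else 0) := by
  rw [Set.ncard_eq_toFinset_card']
  have h : (G.neighborSet i).toFinset = Finset.univ.filter (fun j => G.Adj i j) := by
    ext j; simp
  rw [h, ← Finset.sum_boole]

lemma aalpha_mulVec (G : SimpleGraph V) (α : ℝ) (x : V → ℝ) (i : V) :
    (Aalpha G α).mulVec x i =
      ∑ j, (if G.Adj i j then (1:ℝ) else 0) * (α * x i + (1 - α) * x j) := by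
  simp only [Aalpha, Matrix.mulVec, dotProduct, Matrix.add_apply, Matrix.smul_apply,
    Matrix.of_apply, Matrix.diagonal_apply, smul_eq_mul]
  simp only [add_mul, mul_add]
  rw [Finset.sum_add_distrib, Finset.sum_add_distrib]
  congr 1
  · have h : ∀ j, (α * (if i = j then ((G.neighborSet i).ncard:ℝ) else 0)) * x j
        = if i = j then α * (((G.neighborSet i).ncard:ℝ) * x i) else 0 := by
      intro j; by_cases h : i = j
      · subst h; simp; ring
      · simp [h]
    rw [Finset.sum_congr rfl (fun j _ => h j), Finset.sum_ite_eq]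
    have h2 : ∑ j, (if G.Adj i j then (1:ℝ) else 0) * (α * x i)
        = (∑ j, (if G.Adj i j then (1:ℝ) else 0)) * (α * x i) := by
      rw [Finset.sum_mul]
    rw [h2, ← deg_eq_sum]
    simp; ring
  · exact Finset.sum_congr rfl fun j _ => by ring

lemma pair_sum (N : Set V) (a : V) (ha : a ∉ N) (g : V → V → ℝ) :
    ∑ i, ∑ j, (if (i = a ∧ j ∈ N) ∨ (i ∈ N ∧ j = a) then (1:ℝ) else 0) * g i j
      = ∑ j, (if j ∈ N then (1:ℝ) else 0) * (g a j + g j a) := by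
  have h : ∀ i j, (if (i = a ∧ j ∈ N) ∨ (i ∈ N ∧ j = a) then (1:ℝ) else 0) * g i j
      = (if i = a then (if j ∈ N then g i j else 0) else 0)
        + (if j = a then (if i ∈ N then g i j else 0) else 0) := by
    intro i j
    by_cases h1 : i = a <;> by_cases h2 : j = a <;> simp_all
  calc ∑ i, ∑ j, (if (i = a ∧ j ∈ N) ∨ (i ∈ N ∧ j = a) then (1:ℝ) else 0) * g i j
      = ∑ i, ∑ j, ((if i = a then (if j ∈ N then g i j else 0) else 0)
        + (if j = a then (if i ∈ N then g i j else 0) else 0)) :=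
        Finset.sum_congr rfl fun i _ => Finset.sum_congr rfl fun j _ => h i j
    _ = (∑ i, ∑ j, (if i = a then (if j ∈ N then g i j else 0) else 0))
        + ∑ i, ∑ j, (if j = a then (if i ∈ N then g i j else 0) else 0) := by
        rw [← Finset.sum_add_distrib]
        exact Finset.sum_congr rfl fun i _ => Finset.sum_add_distrib
    _ = (∑ j, if j ∈ N then g a j else 0) + ∑ i, (if i ∈ N then g i a else 0) := by
        congr 1
        · rw [Finset.sum_congr rfl (fun i (_ : i ∈ Finset.univ) =>
            (by by_cases h1 : i = a <;> simp [h1] :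
              (∑ j, (if i = a then (if j ∈ N then g i j else 0) else 0))
                = if i = a then (∑ j, if j ∈ N then g a j else 0) else 0))]
          rw [Finset.sum_ite_eq']
          simp
        · exact Finset.sum_congr rfl fun i _ => by rw [Finset.sum_ite_eq']; simp
    _ = ∑ j, (if j ∈ N then (1:ℝ) else 0) * (g a j + g j a) := by
        rw [← Finset.sum_add_distrib]
        refine Finset.sum_congr rfl fun j _ => ?_
        by_cases hj : j ∈ N <;> simp [hj]

end AuxLemmas

open Matrix in
theorem stmt18 {V : Type*} [Fintype V] (G : SimpleGraph V) (hG : G.Connected)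
    (α : ℝ) (hα1 : 0 ≤ α) (hα2 : α < 1) (u v : V) (N : Set V)
    (hN : N ⊆ G.neighborSet v \ (G.neighborSet u ∪ {u})) (hNe : N.Nonempty)
    (X : V → ℝ) (hXpos : ∀ i : V, 0 < X i) (r : ℝ)
    (hr : IsLargestEigenvalue (Aalpha G α) r)
    (hX : (Aalpha G α).mulVec X = r • X) (hxy : X v ≤ X u) :
    ∀ r' : ℝ,
      IsLargestEigenvalue
        (Aalpha ((G.deleteEdges {e | ∃ w ∈ N, e = s(v, w)}) ⊔
          SimpleGraph.fromEdgeSet {e | ∃ w ∈ N, e = s(u, w)}) α) r' →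
      r < r' := by
  intro r' hr'
  set G' : SimpleGraph V := (G.deleteEdges {e | ∃ w ∈ N, e = s(v, w)}) ⊔
      SimpleGraph.fromEdgeSet {e | ∃ w ∈ N, e = s(u, w)} with hG'
  clear_value G'
  have hα3 : 0 < 1 - α := by linarith
  have hvw : ∀ w ∈ N, G.Adj v w := fun w hw => (hN hw).1
  have hunw : ∀ w ∈ N, ¬ G.Adj u w := fun w hw h =>
    (hN hw).2 (Set.mem_union_left _ h)
  have hwu : ∀ w ∈ N, w ≠ u := fun w hw h =>
    (hN hw).2 (Set.mem_union_right _ (Set.mem_singleton_iff.mpr h))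
  have hwv : ∀ w ∈ N, w ≠ v := fun w hw h => G.irrefl (h ▸ hvw w hw)
  have huN : u ∉ N := fun h => hwu u h rfl
  have hvN : v ∉ N := fun h => hwv v h rfl
  have huv : u ≠ v := by
    obtain ⟨w, hw⟩ := hNe
    intro h; exact hunw w hw (h ▸ hvw w hw)
  -- membership of edges in the two edge sets
  have hmem : ∀ (a i j : V), (s(i,j) ∈ {e | ∃ w ∈ N, e = s(a,w)}) ↔
      ((i = a ∧ j ∈ N) ∨ (i ∈ N ∧ j = a)) := by
    intro a i j
    simp only [Set.mem_setOf_eq, Sym2.eq_iff]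
    constructor
    · rintro ⟨w, hw, (⟨rfl, rfl⟩ | ⟨rfl, rfl⟩)⟩
      · exact Or.inl ⟨rfl, hw⟩
      · exact Or.inr ⟨hw, rfl⟩
    · rintro (⟨rfl, hj⟩ | ⟨hi, rfl⟩)
      · exact ⟨j, hj, Or.inl ⟨rfl, rfl⟩⟩
      · exact ⟨i, hi, Or.inr ⟨rfl, rfl⟩⟩
  -- the adjacency indicator of G' versus that of G
  have hf : ∀ i j, (if G'.Adj i j then (1:ℝ) else 0) =
      (if G.Adj i j then (1:ℝ) else 0)
      + (if (i = u ∧ j ∈ N) ∨ (i ∈ N ∧ j = u) then (1:ℝ) else 0)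
      - (if (i = v ∧ j ∈ N) ∨ (i ∈ N ∧ j = v) then (1:ℝ) else 0) := by
    intro i j
    have hadj' : G'.Adj i j ↔ (G.Adj i j ∧ ¬((i = v ∧ j ∈ N) ∨ (i ∈ N ∧ j = v))) ∨
        (((i = u ∧ j ∈ N) ∨ (i ∈ N ∧ j = u)) ∧ i ≠ j) := by
      rw [hG']
      simp only [SimpleGraph.sup_adj, SimpleGraph.deleteEdges_adj,
        SimpleGraph.fromEdgeSet_adj, hmem]
    simp only [hadj']
    by_cases hP : (i = u ∧ j ∈ N) ∨ (i ∈ N ∧ j = u)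
    · have h1 : ¬ G.Adj i j := by
        rcases hP with ⟨rfl, hj⟩ | ⟨hi, rfl⟩
        · exact hunw j hj
        · exact fun h => hunw i hi h.symm
      have h2 : ¬((i = v ∧ j ∈ N) ∨ (i ∈ N ∧ j = v)) := by
        rcases hP with ⟨rfl, hj⟩ | ⟨hi, rfl⟩
        · rintro (⟨h, -⟩ | ⟨h, -⟩)
          · exact huv h
          · exact huN h
        · rintro (⟨h, hj⟩ | ⟨-, h⟩)
          · exact hvN (h ▸ hi)
          · exact huv h
      have h3 : i ≠ j := by
        rcases hP with ⟨rfl, hj⟩ | ⟨hi, rfl⟩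
        · exact fun h => huN (h ▸ hj)
        · exact fun h => huN (h ▸ hi)
      simp [hP, h1, h2, h3]
    · by_cases hQ : (i = v ∧ j ∈ N) ∨ (i ∈ N ∧ j = v)
      · have h1 : G.Adj i j := by
          rcases hQ with ⟨rfl, hj⟩ | ⟨hi, rfl⟩
          · exact hvw j hj
          · exact (hvw i hi).symm
        simp [hP, hQ, h1]
      · simp [hP, hQ]
  -- the change in row u of the matrix
  have hrow : ∀ j, (if G'.Adj u j then (1:ℝ) else 0) =
      (if G.Adj u j then (1:ℝ) else 0) + (if j ∈ N then (1:ℝ) else 0) := by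
    intro j
    rw [hf u j]
    have e1 : ((u = u ∧ j ∈ N) ∨ (u ∈ N ∧ j = u)) ↔ j ∈ N := by simp [huN]
    have e2 : ¬((u = v ∧ j ∈ N) ∨ (u ∈ N ∧ j = v)) := by simp [huv, huN]
    rw [if_congr e1 rfl rfl, if_neg e2, sub_zero]
  have hAu : (Aalpha G' α).mulVec X u - (Aalpha G α).mulVec X u
      = ∑ j, (if j ∈ N then (1:ℝ) else 0) * (α * X u + (1 - α) * X j) := by
    rw [aalpha_mulVec, aalpha_mulVec, ← Finset.sum_sub_distrib]
    refine Finset.sum_congr rfl fun j _ => ?_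
    rw [hrow j]; ring
  have hDu : 0 < ∑ j, (if j ∈ N then (1:ℝ) else 0) * (α * X u + (1 - α) * X j) := by
    obtain ⟨w, hw⟩ := hNe
    refine Finset.sum_pos' (fun j _ => ?_) ⟨w, Finset.mem_univ w, ?_⟩
    · by_cases hj : j ∈ N
      · simp only [hj, if_true, one_mul]
        have := hXpos j; have := hXpos u; nlinarith
      · simp [hj]
    · simp only [hw, if_true, one_mul]
      have := hXpos w; have := hXpos u; nlinarith
  -- the quadratic form difference
  set g : V → V → ℝ := fun i j => X i * (α * X i + (1 - α) * X j) with hg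
  have hQdiff : X ⬝ᵥ (Aalpha G' α).mulVec X - X ⬝ᵥ (Aalpha G α).mulVec X
      = ∑ j, (if j ∈ N then (1:ℝ) else 0) * ((g u j + g j u) - (g v j + g j v)) := by
    have step1 : X ⬝ᵥ (Aalpha G' α).mulVec X - X ⬝ᵥ (Aalpha G α).mulVec X
        = ∑ i, ∑ j, ((if (i = u ∧ j ∈ N) ∨ (i ∈ N ∧ j = u) then (1:ℝ) else 0) * g i j
          - (if (i = v ∧ j ∈ N) ∨ (i ∈ N ∧ j = v) then (1:ℝ) else 0) * g i j) := by
      simp only [dotProduct]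
      rw [← Finset.sum_sub_distrib]
      refine Finset.sum_congr rfl fun i _ => ?_
      rw [aalpha_mulVec, aalpha_mulVec, Finset.mul_sum, Finset.mul_sum,
        ← Finset.sum_sub_distrib]
      refine Finset.sum_congr rfl fun j _ => ?_
      rw [hf i j, hg]; ring
    rw [step1]
    have step2 : ∑ i, ∑ j, ((if (i = u ∧ j ∈ N) ∨ (i ∈ N ∧ j = u) then (1:ℝ) else 0) * g i j
          - (if (i = v ∧ j ∈ N) ∨ (i ∈ N ∧ j = v) then (1:ℝ) else 0) * g i j)
        = (∑ i, ∑ j, (if (i = u ∧ j ∈ N) ∨ (i ∈ N ∧ j = u) then (1:ℝ) else 0) * g i j)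
          - ∑ i, ∑ j, (if (i = v ∧ j ∈ N) ∨ (i ∈ N ∧ j = v) then (1:ℝ) else 0) * g i j := by
      rw [← Finset.sum_sub_distrib]
      exact Finset.sum_congr rfl fun i _ => Finset.sum_sub_distrib _ _
    rw [step2, pair_sum N u huN g, pair_sum N v hvN g, ← Finset.sum_sub_distrib]
    exact Finset.sum_congr rfl fun j _ => by ring
  have hΔ : 0 ≤ ∑ j, (if j ∈ N then (1:ℝ) else 0) * ((g u j + g j u) - (g v j + g j v)) := by
    refine Finset.sum_nonneg fun j _ => ?_
    by_cases hj : j ∈ N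
    · simp only [hj, if_true, one_mul, hg]
      have h1 := hXpos j; have h2 := hXpos u; have h3 := hXpos v
      nlinarith [mul_nonneg (mul_nonneg hα1 (sub_nonneg.mpr hxy)) (by linarith : (0:ℝ) ≤ X u + X v),
        mul_nonneg (mul_nonneg hα3.le (sub_nonneg.mpr hxy)) h1.le]
    · simp [hj]
  -- spectral estimates
  have hne : Nonempty V := ⟨u⟩
  have hS : 0 < X ⬝ᵥ X :=
    Finset.sum_pos (fun i _ => mul_pos (hXpos i) (hXpos i)) Finset.univ_nonempty
  have hpsd := largest_psd' (aalpha_isHermitian G' α) hr'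
  have hstar : star X = X := funext fun i => star_trivial _
  have hray : X ⬝ᵥ (Aalpha G' α).mulVec X ≤ r' * (X ⬝ᵥ X) := by
    have h0 := hpsd.dotProduct_mulVec_nonneg X
    rw [hstar, Matrix.sub_mulVec, Matrix.smul_mulVec, Matrix.one_mulVec,
      dotProduct_sub, dotProduct_smul, smul_eq_mul] at h0
    linarith
  have hAX : X ⬝ᵥ (Aalpha G α).mulVec X = r * (X ⬝ᵥ X) := by
    rw [hX, dotProduct_smul, smul_eq_mul]
  by_contra hcon
  push_neg at hcon
  have hmul : r' * (X ⬝ᵥ X) ≤ r * (X ⬝ᵥ X) := mul_le_mul_of_nonneg_right hcon hS.le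
  have hQ' : X ⬝ᵥ (Aalpha G' α).mulVec X = r' * (X ⬝ᵥ X) := by linarith
  have hzero : star X ⬝ᵥ (r' • (1 : Matrix V V ℝ) - Aalpha G' α).mulVec X = 0 := by
    rw [hstar, Matrix.sub_mulVec, Matrix.smul_mulVec, Matrix.one_mulVec,
      dotProduct_sub, dotProduct_smul, smul_eq_mul]
    linarith
  have hEig := (hpsd.dotProduct_mulVec_zero_iff X).mp hzero
  rw [Matrix.sub_mulVec, Matrix.smul_mulVec, Matrix.one_mulVec, sub_eq_zero] at hEig
  have h1 : (Aalpha G' α).mulVec X u = r' * X u := by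
    rw [← hEig]; simp
  have h2 : (Aalpha G α).mulVec X u = r * X u := by
    rw [hX]; simp
  have h3 : r * X u < r' * X u := by
    rw [← h1, ← h2]; linarith
  exact absurd (lt_of_mul_lt_mul_right h3 (hXpos u).le) (not_lt.mpr hcon)
end

section
/- For n ≥ 7 odd and α ∈ [1/2, 1), the α-index of the friendship graph satisfies ρ_α(F_{(n−1)/2}) = (αn + 1 + √(α²n² − 10αn + 12α + 4n − 3))/2 > α(n−1) + (1−α)²/α. -/
open scoped Classical

/-- Perron-type bound: a symmetric nonnegative matrix with a positive eigenvector `y`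
for eigenvalue `ρ` has all its eigenvalues bounded above by `ρ`. -/
lemma perron_bound {m : Type*} [Fintype m] (M : Matrix m m ℝ)
    (hsym : ∀ i j, M i j = M j i) (hnn : ∀ i j, 0 ≤ M i j)
    (y : m → ℝ) (hy : ∀ i, 0 < y i) (ρ : ℝ) (hyρ : M.mulVec y = ρ • y)
    (s : ℝ) (x : m → ℝ) (hx : x ≠ 0) (hxs : M.mulVec x = s • x) : s ≤ ρ := by
  set z : m → ℝ := fun i => |x i| with hz
  have hznn : ∀ i, 0 ≤ z i := fun i => abs_nonneg _
  have h1 : ∀ i, |s| * z i ≤ M.mulVec z i := by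
    intro i
    have h0 : |s| * z i = |(M.mulVec x) i| := by
      rw [hxs]; simp [hz, abs_mul]
    rw [h0]
    calc |(M.mulVec x) i| ≤ ∑ j, |M i j * x j| :=
          Finset.abs_sum_le_sum_abs _ _
      _ = ∑ j, M i j * z j := by
          refine Finset.sum_congr rfl fun j _ => ?_
          rw [abs_mul, abs_of_nonneg (hnn i j)]
      _ = M.mulVec z i := rfl
  have hsum_pos : 0 < ∑ i, y i * z i := by
    obtain ⟨i, hi⟩ : ∃ i, x i ≠ 0 := by
      by_contra h; push_neg at h; exact hx (funext h)
    refine Finset.sum_pos' (fun j _ => mul_nonneg (hy j).le (hznn j)) ?_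
    exact ⟨i, Finset.mem_univ i, mul_pos (hy i) (abs_pos.mpr hi)⟩
  have h2 : ∑ i, y i * (M.mulVec z i) = ρ * ∑ i, y i * z i := by
    calc ∑ i, y i * M.mulVec z i = ∑ i, ∑ j, y i * (M i j * z j) := by
          refine Finset.sum_congr rfl fun i _ => ?_
          rw [Matrix.mulVec, dotProduct, Finset.mul_sum]
      _ = ∑ j, (∑ i, M j i * y i) * z j := by
          rw [Finset.sum_comm]
          refine Finset.sum_congr rfl fun j _ => ?_
          rw [Finset.sum_mul]
          refine Finset.sum_congr rfl fun i _ => ?_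
          rw [hsym j i]; ring
      _ = ∑ j, ρ * (y j * z j) := by
          refine Finset.sum_congr rfl fun j _ => ?_
          have hj : M.mulVec y j = ρ * y j := by rw [hyρ]; simp
          rw [show (∑ i, M j i * y i) = M.mulVec y j from rfl, hj]; ring
      _ = ρ * ∑ i, y i * z i := by rw [Finset.mul_sum]
  have h3 : |s| * ∑ i, y i * z i ≤ ρ * ∑ i, y i * z i := by
    rw [← h2, Finset.mul_sum]
    refine Finset.sum_le_sum fun i _ => ?_
    calc |s| * (y i * z i) = y i * (|s| * z i) := by ring
      _ ≤ y i * M.mulVec z i := mul_le_mul_of_nonneg_left (h1 i) (hy i).le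
  have habs : |s| ≤ ρ := le_of_mul_le_mul_right (by linarith [h3]) hsum_pos
  exact (le_abs_self s).trans habs

/-- mulVec of the `A_α`-matrix, in terms of degree and neighbor sum. -/
lemma Aalpha_mulVec {V : Type*} [Fintype V] (G : SimpleGraph V) (α : ℝ) (y : V → ℝ) (u : V) :
    (Aalpha G α).mulVec y u =
      α * (G.neighborSet u).ncard * y u +
        (1 - α) * ∑ v, (if G.Adj u v then y v else 0) := by
  simp only [Aalpha, Matrix.mulVec, dotProduct, Matrix.add_apply, Matrix.smul_apply,
    Matrix.of_apply, Matrix.diagonal_apply, smul_eq_mul, add_mul, ite_mul, zero_mul, one_mul,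
    mul_ite, mul_zero]
  rw [Finset.sum_add_distrib, Finset.sum_ite_eq, Finset.mul_sum]
  simp [mul_assoc]

set_option maxHeartbeats 1000000 in
theorem stmt19 (n : ℕ) (hn : 7 ≤ n) (hodd : Odd n) (α : ℝ)
    (hα1 : 1 / 2 ≤ α) (hα2 : α < 1) (r : ℝ)
    (hr : IsLargestEigenvalue (Aalpha (friendshipGraph ((n - 1) / 2)) α) r) :
    r = (α * n + 1 + Real.sqrt (α ^ 2 * n ^ 2 - 10 * α * n + 12 * α + 4 * n - 3)) / 2 ∧
    α * (n - 1) + (1 - α) ^ 2 / α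
      < (α * n + 1 + Real.sqrt (α ^ 2 * n ^ 2 - 10 * α * n + 12 * α + 4 * n - 3)) / 2 := by
  obtain ⟨m, hm⟩ := hodd
  set k := (n - 1) / 2 with hk
  have hkn : n = 2 * k + 1 := by omega
  have hα0 : (0:ℝ) < α := by linarith
  have h1α : (0:ℝ) < 1 - α := by linarith
  have hn7 : (7:ℝ) ≤ (n:ℝ) := by exact_mod_cast hn
  have hncast : (n:ℝ) = 2 * (k:ℝ) + 1 := by rw [hkn]; push_cast; ring
  have hDpos : (0:ℝ) < α ^ 2 * n ^ 2 - 10 * α * n + 12 * α + 4 * n - 3 := by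
    nlinarith [sq_nonneg (α * (n:ℝ) - 5)]
  set s := Real.sqrt (α ^ 2 * (n:ℝ) ^ 2 - 10 * α * n + 12 * α + 4 * n - 3) with hsdef
  have hs0 : 0 ≤ s := Real.sqrt_nonneg _
  have hspos : 0 < s := by rw [hsdef]; exact Real.sqrt_pos.mpr hDpos
  have hs2 : s ^ 2 = α ^ 2 * (n:ℝ) ^ 2 - 10 * α * n + 12 * α + 4 * n - 3 := by
    rw [hsdef]; exact Real.sq_sqrt hDpos.le
  set ρ := (α * (n:ℝ) + 1 + s) / 2 with hρdef
  have hquad : ρ ^ 2 - (α * (n:ℝ) + 1) * ρ + ((n:ℝ) - 1) * (3 * α - 1) = 0 := by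
    rw [hρdef]; linear_combination hs2 / 4
  have hρα : α + 1 < ρ := by rw [hρdef]; nlinarith
  -- adjacency facts
  have hadj0 : ∀ v : Fin (2*k+1), (friendshipGraph k).Adj 0 v ↔ v ≠ 0 := by
    intro v
    constructor
    · rintro ⟨h1, _⟩; exact fun h => h1 h.symm
    · intro h; exact ⟨fun h' => h h'.symm, Or.inl rfl⟩
  have hpair : ∀ u : Fin (2*k+1), u ≠ 0 → ∃ w : Fin (2*k+1), w ≠ 0 ∧
      (∀ v, (friendshipGraph k).Adj u v ↔ v = 0 ∨ v = w) := by
    intro u hu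
    have hu0 : u.val ≠ 0 := fun h => hu (Fin.ext h)
    have hul : u.val < 2*k+1 := u.isLt
    obtain ⟨wv, hwlt, hw0, hiff⟩ : ∃ wv, wv < 2*k+1 ∧ wv ≠ 0 ∧
        ∀ v' < 2*k+1, ((v' ≠ u.val) ∧ (u.val = 0 ∨ v' = 0 ∨ (u.val+1)/2 = (v'+1)/2)) ↔
          (v' = 0 ∨ v' = wv) := by
      rcases Nat.even_or_odd u.val with ⟨m', hm'⟩ | ⟨m', hm'⟩
      · exact ⟨u.val - 1, by omega, by omega, fun v' hv' => by omega⟩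
      · exact ⟨u.val + 1, by omega, by omega, fun v' hv' => by omega⟩
    refine ⟨⟨wv, hwlt⟩, ?_, ?_⟩
    · intro h
      exact hw0 (by simpa [Fin.ext_iff] using h)
    · intro v
      have hadj : (friendshipGraph k).Adj u v ↔
          (u ≠ v ∧ (u.val = 0 ∨ v.val = 0 ∨ (u.val + 1) / 2 = (v.val + 1) / 2)) := Iff.rfl
      rw [hadj]
      have h2 := hiff v.val v.isLt
      constructor
      · rintro ⟨hne, hor⟩
        have hne' : v.val ≠ u.val := by simpa [Fin.ext_iff, eq_comm] using hne
        rcases h2.mp ⟨hne', hor⟩ with h | h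
        · exact Or.inl (Fin.ext (by simpa using h))
        · exact Or.inr (Fin.ext (by simpa using h))
      · intro h
        have hv : v.val = 0 ∨ v.val = wv := by
          rcases h with h | h <;> [left; right] <;> subst h <;> simp
        have h3 := h2.mpr hv
        exact ⟨fun he => h3.1 (by simpa [Fin.ext_iff, eq_comm] using he), h3.2⟩
  -- degrees
  have hdeg0 : ((friendshipGraph k).neighborSet 0).ncard = 2*k := by
    have h1 : (friendshipGraph k).neighborSet 0 = {(0 : Fin (2*k+1))}ᶜ := by
      ext v; simp [SimpleGraph.mem_neighborSet, hadj0]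
    rw [h1, Set.ncard_eq_toFinset_card', Set.toFinset_compl, Set.toFinset_singleton,
      Finset.compl_eq_univ_sdiff, Finset.card_sdiff_of_subset (Finset.subset_univ _)]
    simp
  have hdegne : ∀ u : Fin (2*k+1), u ≠ 0 → ((friendshipGraph k).neighborSet u).ncard = 2 := by
    intro u hu
    obtain ⟨w, hw0, hwadj⟩ := hpair u hu
    have h1 : (friendshipGraph k).neighborSet u = {(0 : Fin (2*k+1)), w} := by
      ext v; simp [SimpleGraph.mem_neighborSet, hwadj]
    rw [h1]
    exact Set.ncard_pair (Ne.symm hw0)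
  -- the Perron eigenvector
  set yv : Fin (2*k+1) → ℝ := fun v => if v = 0 then ρ - α - 1 else 1 - α with hyv
  have hy0 : yv 0 = ρ - α - 1 := by simp [hyv]
  have hypos : ∀ v, 0 < yv v := by
    intro v
    by_cases h : v = 0 <;> simp [hyv, h] <;> linarith
  have hyne : yv ≠ 0 := by
    intro h
    have h0 := congrFun h 0
    rw [hy0] at h0
    simp at h0
    linarith
  -- the eigenvalue equation
  have heig : (Aalpha (friendshipGraph k) α).mulVec yv = ρ • yv := by
    funext u
    rw [Aalpha_mulVec]
    by_cases hu : u = 0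
    · subst hu
      have hsum : ∑ v, (if (friendshipGraph k).Adj 0 v then yv v else 0)
          = (2*(k:ℝ)) * (1-α) := by
        have hc : ∀ v : Fin (2*k+1), (if (friendshipGraph k).Adj 0 v then yv v else 0)
            = ((1-α) - if v = 0 then (1-α) else 0) := by
          intro v
          by_cases h : v = 0 <;> simp [hadj0, h, hyv]
        rw [Finset.sum_congr rfl fun v _ => hc v, Finset.sum_sub_distrib,
          Finset.sum_const, Finset.sum_ite_eq' Finset.univ (0 : Fin (2*k+1)) (fun _ => 1-α)]
        simp [Finset.card_univ]
  
        ring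
      rw [hsum, hdeg0, hy0]
      simp only [Pi.smul_apply, smul_eq_mul, hy0]
      push_cast
      linear_combination (-1) * hquad - (α * ρ - 3 * α + 1) * hncast
    · obtain ⟨w, hw0, hwadj⟩ := hpair u hu
      have hsum : ∑ v, (if (friendshipGraph k).Adj u v then yv v else 0) = yv 0 + yv w := by
        have hc : ∀ v, (if (friendshipGraph k).Adj u v then yv v else 0)
            = (if v ∈ ({0, w} : Finset (Fin (2*k+1))) then yv v else 0) := by
          intro v
          refine if_congr ?_ rfl rfl
          rw [hwadj v]; simp
        rw [Finset.sum_congr rfl fun v _ => hc v, Finset.sum_ite_mem, Finset.univ_inter,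
          Finset.sum_pair (Ne.symm hw0)]
      rw [hsum, hdegne u hu]
      have hyu : yv u = 1 - α := by simp [hyv, hu]
      have hyw : yv w = 1 - α := by simp [hyv, hw0]
      simp only [Pi.smul_apply, smul_eq_mul, hyu, hyw, hy0]
      push_cast
      ring
  -- nonnegativity and symmetry of the matrix
  have hMnn : ∀ i j, 0 ≤ Aalpha (friendshipGraph k) α i j := by
    intro i j
    simp only [Aalpha, Matrix.add_apply, Matrix.smul_apply, Matrix.of_apply,
      Matrix.diagonal_apply, smul_eq_mul]
    refine add_nonneg ?_ ?_
    · split_ifs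
      · exact mul_nonneg hα0.le (Nat.cast_nonneg _)
      · simp
    · split_ifs
      · linarith
      · simp
  have hMsym : ∀ i j, Aalpha (friendshipGraph k) α i j = Aalpha (friendshipGraph k) α j i := by
    intro i j
    simp only [Aalpha, Matrix.add_apply, Matrix.smul_apply, Matrix.of_apply,
      Matrix.diagonal_apply, smul_eq_mul]
    by_cases h : i = j
    · subst h; rfl
    · rw [if_neg h, if_neg (Ne.symm h)]
      congr 1
      refine congrArg _ (if_congr ?_ rfl rfl)
      exact (friendshipGraph k).adj_comm i j
  obtain ⟨⟨x, hx0, hxr⟩, hmax⟩ := hr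
  have hle : r ≤ ρ := perron_bound _ hMsym hMnn yv hypos ρ heig r x hx0 hxr
  have hge : ρ ≤ r := hmax ρ ⟨yv, hyne, heig⟩
  refine ⟨le_antisymm hle hge, ?_⟩
  -- the strict inequality
  have key : α^2 * (n:ℝ) - 5 * α + 2 < α * s := by
    rcases le_or_gt (α^2 * (n:ℝ) - 5 * α + 2) 0 with h | h
    · exact lt_of_le_of_lt h (mul_pos hα0 hspos)
    · nlinarith [hs2, mul_pos hα0 hspos, sq_nonneg (1 - α), mul_pos hα0 hα0,
        mul_pos (mul_pos hα0 hα0) hspos]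
  have hq : α * (α * ((n:ℝ) - 1) + (1 - α)^2 / α) = α^2 * ((n:ℝ) - 1) + (1 - α)^2 := by
    field_simp
  have hmul : α * (α * ((n:ℝ) - 1) + (1 - α)^2 / α) < α * ρ := by
    rw [hq, hρdef]
    nlinarith [key]
  exact (mul_lt_mul_iff_right₀ hα0).mp hmul
end
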